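/- arXiv:1605.05421 — 6 statements merged into one kernel-verified Lean document; each statement's English description precedes it below -/
import Mathlib

section
/- If a connected k-regular graph on n ≥ 4 vertices has exactly four distinct adjacency eigenvalues k > λ₂ > λ₃ > λ₄ with multiplicities 1, 1, 1, n−3 respectively, then no such graph exists; i.e., there is no connected regular graph with four distinct eigenvalues of which at least three are simple. -/
open Polynomial

noncomputable def adjm {V : Type*} [Fintype V] [DecidableEq V] (G : SimpleGraph V) :
    Matrix V V ℝ :=
  @SimpleGraph.adjMatrix ℝ V G (Classical.decRel _) _ _

/-- The adjacency spectrum of `G`, as a multiset of real roots of the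
characteristic polynomial (so multiplicities are counted). -/
noncomputable def spec {V : Type*} [Fintype V] [DecidableEq V] (G : SimpleGraph V) :
    Multiset ℝ :=
  (adjm G).charpoly.roots

/-- `G` is `k`-regular: every vertex has exactly `k` neighbours. -/
def IsReg {V : Type*} (G : SimpleGraph V) (k : ℕ) : Prop :=
  ∀ v : V, (G.neighborSet v).ncard = k

/-!
Let `u, v, w` be unit eigenvectors for the simple eigenvalues `k, λ₂, λ₃`. Every polynomial `q`
vanishing at `λ₄` satisfies `q(A) = q(k) uuᵀ + q(λ₂) vvᵀ + q(λ₃) wwᵀ`. The all-ones vector is a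
`k`-eigenvector, so `u` is constant and `uuᵀ = J/n`. The diagonal of `(A - λ₃)(A - λ₄)` is
`k + λ₃λ₄`, because `A²` has diagonal `k`; hence `v x ^ 2` does not depend on `x`, so it is `1/n`,
and likewise `w x ^ 2 = 1/n`. Fix a vertex `x₀`. The sign vectors `y ↦ n v(x₀) v(y)` and
`y ↦ n w(x₀) w(y)` have sum zero and are orthogonal, so all four sign patterns occur. Off the
diagonal `n A x₀ y = (k - λ₄) ± (λ₂ - λ₄) ± (λ₃ - λ₄)`, so the patterns `(+,-)`, `(-,+)`, `(-,-)`
give three pairwise distinct entries of a `0/1` matrix, which is impossible.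
-/

open Matrix Finset

theorem Fintype.sum_eq_add_add {ι M : Type*} [Fintype ι] [DecidableEq ι] [AddCommMonoid M]
    {f : ι → M} {i₀ i₁ i₂ : ι} (h₀₁ : i₀ ≠ i₁) (h₀₂ : i₀ ≠ i₂) (h₁₂ : i₁ ≠ i₂)
    (hf : ∀ j, j ≠ i₀ → j ≠ i₁ → j ≠ i₂ → f j = 0) :
    ∑ j, f j = f i₀ + f i₁ + f i₂ := by
  rw [← Finset.sum_subset (subset_univ {i₀, i₁, i₂}) fun j _ hj ↦ by simp_all,
    sum_insert (by simp [h₀₁, h₀₂]), sum_pair h₁₂, add_assoc]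

theorem Multiset.exists_eq_of_map_univ_eq {ι α : Type*} [Fintype ι] [DecidableEq α] {μ : ι → α}
    {k a b c : α} {m : ℕ} (hka : k ≠ a) (hkb : k ≠ b) (hkc : k ≠ c) (hab : a ≠ b) (hac : a ≠ c)
    (hbc : b ≠ c) (h : univ.val.map μ = {k, a, b} + replicate m c) :
    ∃ i₀ i₁ i₂, μ i₀ = k ∧ μ i₁ = a ∧ μ i₂ = b ∧ ∀ j, j ≠ i₀ → j ≠ i₁ → j ≠ i₂ → μ j = c := by
  have hsimple : ∀ r, count r (univ.val.map μ) = 1 → ∃ i, μ i = r ∧ ∀ j, μ j = r → j = i := by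
    intro r hr
    rw [count_map, ← Finset.filter_val, Finset.card_val] at hr
    obtain ⟨i, hi⟩ := Finset.card_eq_one.1 hr
    obtain ⟨hi_mem, hi_unique⟩ := eq_singleton_iff_unique_mem.1 hi
    exact ⟨i, (Finset.mem_filter.1 hi_mem).2.symm, fun j hj ↦ hi_unique j (by simp [hj])⟩
  obtain ⟨i₀, hi₀, huniq₀⟩ := hsimple k (by simp [h, count_replicate, hka, hkb, hkc.symm])
  obtain ⟨i₁, hi₁, huniq₁⟩ := hsimple a (by simp [h, count_replicate, hka.symm, hab, hac.symm])
  obtain ⟨i₂, hi₂, huniq₂⟩ := hsimple b (by simp [h, count_replicate, hkb.symm, hab.symm, hbc.symm])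
  refine ⟨i₀, i₁, i₂, hi₀, hi₁, hi₂, fun j h₀ h₁ h₂ ↦ ?_⟩
  have hj : μ j ∈ univ.val.map μ := mem_map_of_mem μ (mem_univ j)
  rw [h] at hj
  simp only [insert_eq_cons, mem_add, mem_cons, mem_singleton] at hj
  rcases hj with (hj | hj | hj) | hj
  · exact absurd (huniq₀ j hj) h₀
  · exact absurd (huniq₁ j hj) h₁
  · exact absurd (huniq₂ j hj) h₂
  · exact eq_of_mem_replicate hj

theorem Fintype.exists_eq_and_eq_of_sum_eq_zero {ι : Type*} [Fintype ι] [Nonempty ι]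
    {f g : ι → ℝ} (hf : ∀ i, f i ^ 2 = 1) (hg : ∀ i, g i ^ 2 = 1) (hf₀ : ∑ i, f i = 0)
    (hg₀ : ∑ i, g i = 0) (hfg : ∑ i, f i * g i = 0) (ε δ : ℝ) (hε : ε ^ 2 = 1)
    (hδ : δ ^ 2 = 1) : ∃ i, f i = ε ∧ g i = δ := by
  have hsign : ∀ s t : ℝ, s ^ 2 = 1 → t ^ 2 = 1 → 1 + s * t ≠ 0 → t = s := fun s t hs ht hst ↦ by
    have : (s * t - 1) * (1 + s * t) = 0 := by linear_combination ht * s ^ 2 + hs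
    have hst1 : s * t = 1 := by linarith [(mul_eq_zero.1 this).resolve_right hst]
    linear_combination s * hst1 - t * hs
  -- a summand is `4` if `(f i, g i) = (ε, δ)` and `0` otherwise
  have hcount : ∑ i, (1 + ε * f i) * (1 + δ * g i) = Fintype.card ι := by
    simp only [add_mul, one_mul, mul_add, mul_one, sum_add_distrib, ← mul_sum, hf₀, hg₀,
      mul_mul_mul_comm, hfg]
    simp
  obtain ⟨i, -, hi⟩ :=
    exists_ne_zero_of_sum_ne_zero (hcount ▸ Nat.cast_ne_zero.2 Fintype.card_ne_zero)
  exact ⟨i, hsign ε _ hε (hf i) (left_ne_zero_of_mul hi),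
    hsign δ _ hδ (hg i) (right_ne_zero_of_mul hi)⟩

/-- The spectral decomposition `A = k uuᵀ + a vvᵀ + b wwᵀ + c (1 - uuᵀ - vvᵀ - wwᵀ)`, in the form
in which it is used: applied to polynomials `q` that kill the multiple eigenvalue `c`. -/
def Matrix.HasThreeTermExpansion {n : Type*} [Fintype n] [DecidableEq n] (A : Matrix n n ℝ)
    (k a b c : ℝ) (u v w : n → ℝ) : Prop :=
  ∀ q : ℝ[X], q.eval c = 0 → ∀ x y,
    aeval A q x y = q.eval k * (u x * u y) + q.eval a * (v x * v y) + q.eval b * (w x * w y)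

theorem Matrix.sum_aeval_apply_of_sum_apply_eq {n R : Type*} [Fintype n] [DecidableEq n]
    [CommRing R] {A : Matrix n n R} {k : R} (hrow : ∀ x, ∑ y, A x y = k) (q : R[X]) (x : n) :
    ∑ y, aeval A q x y = q.eval k := by
  have hmulVec : ∀ M : Matrix n n R, M *ᵥ 1 = fun x ↦ ∑ y, M x y := fun M ↦ by
    ext x; simp [mulVec, dotProduct]
  have h1 : toLinAlgEquiv' A 1 = k • 1 := by
    ext x; simp [toLinAlgEquiv'_apply, hmulVec, hrow]
  have := congrFun (Module.End.aeval_apply_of_mem_apply_eq_smul (p := q) h1) x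
  rw [aeval_algHom_apply (toLinAlgEquiv' : Matrix n n R ≃ₐ[R] _)] at this
  simpa [toLinAlgEquiv'_apply, hmulVec] using this

namespace Matrix.IsHermitian
variable {n : Type*} [Fintype n] [DecidableEq n] {A : Matrix n n ℝ}

theorem aeval_apply_eq_sum (hA : A.IsHermitian) (q : ℝ[X]) (x y : n) :
    aeval A q x y =
      ∑ j, q.eval (hA.eigenvalues j) * (hA.eigenvectorBasis j x * hA.eigenvectorBasis j y) := by
  rw [← cfc_polynomial q A hA.isSelfAdjoint, hA.cfc_eq, IsHermitian.cfc,
    Unitary.conjStarAlgAut_apply, mul_apply]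
  refine sum_congr rfl fun j _ ↦ ?_
  simp only [RCLike.ofReal_real_eq_id, CompTriple.comp_eq, mul_diagonal, eigenvectorUnitary_apply,
    Function.comp_apply, star_apply, star_trivial]
  ring

theorem sum_eigenvectorBasis_mul (hA : A.IsHermitian) (i j : n) :
    ∑ x, hA.eigenvectorBasis i x * hA.eigenvectorBasis j x = if i = j then 1 else 0 := by
  have := congrFun (congrFun (Unitary.coe_star_mul_self hA.eigenvectorUnitary) i) j
  rw [mul_apply, one_apply] at this
  simpa [mul_comm] using this

theorem exists_expansion_of_roots_charpoly_eq (hA : A.IsHermitian) {k a b c : ℝ} {m : ℕ}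
    (hka : k ≠ a) (hkb : k ≠ b) (hkc : k ≠ c) (hab : a ≠ b) (hac : a ≠ c) (hbc : b ≠ c)
    (hroots : A.charpoly.roots = {k, a, b} + Multiset.replicate m c) :
    ∃ u v w : n → ℝ, ∑ x, u x ^ 2 = 1 ∧ ∑ x, v x ^ 2 = 1 ∧ ∑ x, w x ^ 2 = 1 ∧
      ∑ x, v x * w x = 0 ∧ A.HasThreeTermExpansion k a b c u v w := by
  rw [hA.roots_charpoly_eq_eigenvalues] at hroots
  obtain ⟨i₀, i₁, i₂, hi₀, hi₁, hi₂, hc⟩ :=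
    Multiset.exists_eq_of_map_univ_eq hka hkb hkc hab hac hbc (by simpa using hroots)
  have h₀₁ : i₀ ≠ i₁ := fun h ↦ hka (by rw [← hi₀, h, hi₁])
  have h₀₂ : i₀ ≠ i₂ := fun h ↦ hkb (by rw [← hi₀, h, hi₂])
  have h₁₂ : i₁ ≠ i₂ := fun h ↦ hab (by rw [← hi₁, h, hi₂])
  have hnorm : ∀ i, ∑ x, hA.eigenvectorBasis i x ^ 2 = 1 := fun i ↦ by
    simpa [sq] using hA.sum_eigenvectorBasis_mul i i
  refine ⟨hA.eigenvectorBasis i₀, hA.eigenvectorBasis i₁, hA.eigenvectorBasis i₂, hnorm i₀,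
    hnorm i₁, hnorm i₂, by simpa [h₁₂] using hA.sum_eigenvectorBasis_mul i₁ i₂, ?_⟩
  intro q hq x y
  rw [hA.aeval_apply_eq_sum, Fintype.sum_eq_add_add h₀₁ h₀₂ h₁₂, hi₀, hi₁, hi₂]
  intro j h₀ h₁ h₂
  rw [hc j h₀ h₁ h₂, hq, zero_mul]

end Matrix.IsHermitian

namespace Matrix.HasThreeTermExpansion

variable {n : Type*} [Fintype n] [DecidableEq n] {A : Matrix n n ℝ} {k a b c : ℝ} {u v w : n → ℝ}

local notation "N" => (Fintype.card n : ℝ)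

theorem swap (hexp : A.HasThreeTermExpansion k a b c u v w) :
    A.HasThreeTermExpansion k b a c u w v := fun q hq x y ↦ by
  rw [hexp q hq, add_right_comm]

theorem mul_mul_card_eq_one (hexp : A.HasThreeTermExpansion k a b c u v w)
    (hrow : ∀ x, ∑ y, A x y = k) (hka : k ≠ a) (hkb : k ≠ b) (hkc : k ≠ c)
    (hu : ∑ x, u x ^ 2 = 1) (x y : n) : u x * u y * N = 1 := by
  have hqk : (k - a) * (k - b) * (k - c) ≠ 0 := by simp [sub_ne_zero, hka, hkb, hkc]
  have hS : ∀ x, u x * ∑ y, u y = 1 := fun x ↦ by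
    have hsum := sum_aeval_apply_of_sum_apply_eq hrow ((X - C a) * (X - C b) * (X - C c)) x
    rw [sum_congr rfl fun y _ ↦ hexp _ (by simp) x y] at hsum
    simp only [eval_mul, eval_sub, eval_X, eval_C, sub_self, mul_zero,
      zero_mul, add_zero, ← mul_sum] at hsum
    exact mul_left_cancel₀ hqk (hsum.trans (mul_one _).symm)
  have hSN : (∑ y, u y) ^ 2 = N := by
    calc (∑ y, u y) ^ 2 = ∑ x, u x ^ 2 * (∑ y, u y) ^ 2 := by rw [← sum_mul, hu, one_mul]
      _ = ∑ _x : n, 1 := sum_congr rfl fun x _ ↦ by rw [← mul_pow, hS x, one_pow]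
      _ = N := by simp
  calc u x * u y * N = (u x * ∑ y, u y) * (u y * ∑ y, u y) := by rw [← hSN]; ring
    _ = 1 := by rw [hS, hS, one_mul]

theorem sq_mul_card_eq_one (hexp : A.HasThreeTermExpansion k a b c u v w)
    (hdiag : ∀ x, A x x = 0) (hsq : ∀ x, (A * A) x x = k) (hab : a ≠ b) (hac : a ≠ c)
    (hu : ∀ x y, u x * u y * N = 1) (hv : ∑ x, v x ^ 2 = 1) (x : n) : v x ^ 2 * N = 1 := by
  set P := (a - b) * (a - c)
  have hP : P ≠ 0 := mul_ne_zero (sub_ne_zero.2 hab) (sub_ne_zero.2 hac)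
  have hN : N ≠ 0 := fun h ↦ by simpa [h] using hu x x
  have hconst : ∀ x, P * (v x ^ 2 * N) = N * (k + b * c) - (k - b) * (k - c) := fun x ↦ by
    have hq := hexp ((X - C b) * (X - C c)) (by simp) x x
    have hdiag_q : aeval A ((X - C b) * (X - C c)) x x = k + b * c := by
      simp [sub_mul, mul_sub, Algebra.algebraMap_eq_smul_one, hdiag, hsq, mul_comm c b]
    rw [hdiag_q] at hq
    simp only [eval_mul, eval_sub, eval_X, eval_C, sub_self] at hq
    linear_combination (-N) * hq - (k - b) * (k - c) * hu x x
  have hPN : P * N = N * (N * (k + b * c) - (k - b) * (k - c)) := by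
    calc P * N = ∑ x, P * (v x ^ 2 * N) := by rw [← mul_sum, ← sum_mul, hv, one_mul]
      _ = N * (N * (k + b * c) - (k - b) * (k - c)) := by
        simp only [hconst, sum_const, card_univ, nsmul_eq_mul]
  have hT : N * (k + b * c) - (k - b) * (k - c) = P :=
    mul_left_cancel₀ hN (by linear_combination -hPN)
  exact mul_left_cancel₀ hP (by rw [hconst, hT, mul_one])

theorem sum_eq_zero (hexp : A.HasThreeTermExpansion k a b c u v w)
    (hrow : ∀ x, ∑ y, A x y = k) (hka : k ≠ a) (hab : a ≠ b) (hac : a ≠ c) : ∑ x, v x = 0 := by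
  have hqa : (a - k) * (a - b) * (a - c) ≠ 0 := by simp [sub_ne_zero, hka.symm, hab, hac]
  have hS : ∀ x, v x * ∑ y, v y = 0 := fun x ↦ by
    have hsum := sum_aeval_apply_of_sum_apply_eq hrow ((X - C k) * (X - C b) * (X - C c)) x
    rw [sum_congr rfl fun y _ ↦ hexp _ (by simp) x y] at hsum
    simp only [eval_mul, eval_sub, eval_X, eval_C, sub_self, mul_zero,
      zero_mul, add_zero, zero_add, ← mul_sum] at hsum
    exact (mul_eq_zero.1 hsum).resolve_left hqa
  have : (∑ x, v x) * ∑ x, v x = 0 := by rw [sum_mul]; exact Finset.sum_eq_zero fun x _ ↦ hS x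
  exact mul_self_eq_zero.1 this

theorem card_mul_apply_of_ne (hexp : A.HasThreeTermExpansion k a b c u v w)
    (hu : ∀ x y, u x * u y * N = 1) {x y : n} (hxy : x ≠ y) :
    N * A x y = (k - c) + (a - c) * (N * v x * v y) + (b - c) * (N * w x * w y) := by
  have h := hexp (X - C c) (by simp) x y
  simp only [aeval_sub, aeval_X, aeval_C, Algebra.algebraMap_eq_smul_one, sub_apply, smul_apply,
    one_apply_ne hxy, smul_eq_mul, mul_zero, sub_zero, eval_sub, eval_X, eval_C] at h
  linear_combination N * h + (k - c) * hu x y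

theorem not_forall_eq_zero_or_eq_one (hexp : A.HasThreeTermExpansion k a b c u v w)
    (hu : ∑ x, u x ^ 2 = 1) (hv : ∑ x, v x ^ 2 = 1) (hw : ∑ x, w x ^ 2 = 1)
    (hvw : ∑ x, v x * w x = 0) (hrow : ∀ x, ∑ y, A x y = k) (hdiag : ∀ x, A x x = 0)
    (hsq : ∀ x, (A * A) x x = k) (hka : k ≠ a) (hkb : k ≠ b) (hkc : k ≠ c) (hab : a ≠ b)
    (hac : a ≠ c) (hbc : b ≠ c) : ¬ ∀ x y, A x y = 0 ∨ A x y = 1 := by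
  intro h01
  have huN := hexp.mul_mul_card_eq_one hrow hka hkb hkc hu
  have hvN := hexp.sq_mul_card_eq_one hdiag hsq hab hac huN hv
  have hwN := hexp.swap.sq_mul_card_eq_one hdiag hsq hab.symm hbc huN hw
  obtain ⟨x₀, -⟩ := exists_ne_zero_of_sum_ne_zero (hu ▸ one_ne_zero)
  have : Nonempty n := ⟨x₀⟩
  have hsq_one : ∀ z : n → ℝ, (∀ x, z x ^ 2 * N = 1) → ∀ y, (N * z x₀ * z y) ^ 2 = 1 :=
    fun z hz y ↦ by linear_combination (z y ^ 2 * N) * hz x₀ + hz y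
  have hv₀ : ∑ y, N * v x₀ * v y = 0 := by
    rw [← mul_sum, hexp.sum_eq_zero hrow hka hab hac, mul_zero]
  have hw₀ : ∑ y, N * w x₀ * w y = 0 := by
    rw [← mul_sum, hexp.swap.sum_eq_zero hrow hkb hab.symm hbc, mul_zero]
  have hvw₀ : ∑ y, N * v x₀ * v y * (N * w x₀ * w y) = 0 := by
    simp only [mul_mul_mul_comm _ (v _), ← mul_sum, hvw, mul_zero]
  have hpattern :=
    Fintype.exists_eq_and_eq_of_sum_eq_zero (hsq_one v hvN) (hsq_one w hwN) hv₀ hw₀ hvw₀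
  obtain ⟨y₁, hv₁, hw₁⟩ := hpattern 1 (-1) (by norm_num) (by norm_num)
  obtain ⟨y₂, hv₂, hw₂⟩ := hpattern (-1) 1 (by norm_num) (by norm_num)
  obtain ⟨y₃, hv₃, hw₃⟩ := hpattern (-1) (-1) (by norm_num) (by norm_num)
  have hvx₀ : N * v x₀ * v x₀ = 1 := by linear_combination hvN x₀
  have hwx₀ : N * w x₀ * w x₀ = 1 := by linear_combination hwN x₀
  have h₁ := hexp.card_mul_apply_of_ne huN (x := x₀) (y := y₁) (by rintro rfl; linarith)
  have h₂ := hexp.card_mul_apply_of_ne huN (x := x₀) (y := y₂) (by rintro rfl; linarith)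
  have h₃ := hexp.card_mul_apply_of_ne huN (x := x₀) (y := y₃) (by rintro rfl; linarith)
  rw [hv₁, hw₁] at h₁
  rw [hv₂, hw₂] at h₂
  rw [hv₃, hw₃] at h₃
  rcases h01 x₀ y₁ with e₁ | e₁ <;> rcases h01 x₀ y₂ with e₂ | e₂ <;>
    rcases h01 x₀ y₃ with e₃ | e₃ <;> rw [e₁] at h₁ <;> rw [e₂] at h₂ <;> rw [e₃] at h₃ <;>
    first | exact hab (by linarith) | exact hac (by linarith) | exact hbc (by linarith)

end Matrix.HasThreeTermExpansion

section
variable {V : Type*} [Fintype V] {G : SimpleGraph V} {k : ℕ}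

theorem IsReg.isRegularOfDegree [DecidableRel G.Adj] (h : IsReg G k) : G.IsRegularOfDegree k :=
  fun v ↦ by rw [← h v, Set.ncard_eq_toFinset_card']; rfl

variable [DecidableEq V]

theorem adjm_eq_adjMatrix [DecidableRel G.Adj] : adjm G = G.adjMatrix ℝ := by
  unfold adjm
  congr

theorem isHermitian_adjm : (adjm G).IsHermitian := by
  classical
  simp [adjm_eq_adjMatrix]

theorem adjm_apply_self (x : V) : adjm G x x = 0 := by
  classical
  simp [adjm_eq_adjMatrix]

theorem adjm_apply_eq_zero_or_eq_one (x y : V) : adjm G x y = 0 ∨ adjm G x y = 1 := by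
  classical
  by_cases h : G.Adj x y <;> simp [adjm_eq_adjMatrix, h]

theorem sum_adjm_apply (h : IsReg G k) (x : V) : ∑ y, adjm G x y = k := by
  classical
  simpa [adjm_eq_adjMatrix, Matrix.mulVec, dotProduct] using
    G.adjMatrix_mulVec_const_apply_of_regular (α := ℝ) (a := 1) h.isRegularOfDegree (v := x)

theorem adjm_mul_adjm_apply_self (h : IsReg G k) (x : V) : (adjm G * adjm G) x x = k := by
  classical
  rw [adjm_eq_adjMatrix, G.adjMatrix_mul_self_apply_self, h.isRegularOfDegree x]

end

/-- There is no connected `k`-regular graph on `n ≥ 4` vertices whose spectrum is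
`{[k]^1, [λ₂]^1, [λ₃]^1, [λ₄]^{n-3}}` with four pairwise distinct eigenvalues,
i.e. no connected regular graph with four distinct eigenvalues of which at least
three are simple. -/
theorem stmt_0 :
    ¬ ∃ (n k : ℕ) (G : SimpleGraph (Fin n)) (l2 l3 l4 : ℝ),
      4 ≤ n ∧ G.Connected ∧ IsReg G k ∧
      (k : ℝ) ≠ l2 ∧ (k : ℝ) ≠ l3 ∧ (k : ℝ) ≠ l4 ∧
      l2 ≠ l3 ∧ l2 ≠ l4 ∧ l3 ≠ l4 ∧
      spec G = {(k : ℝ), l2, l3} + Multiset.replicate (n - 3) l4 := by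
  rintro ⟨n, k, G, l2, l3, l4, -, -, hreg, hk2, hk3, hk4, h23, h24, h34, hspec⟩
  obtain ⟨u, v, w, hu, hv, hw, hvw, hexp⟩ :=
    isHermitian_adjm.exists_expansion_of_roots_charpoly_eq hk2 hk3 hk4 h23 h24 h34 hspec
  exact hexp.not_forall_eq_zero_or_eq_one hu hv hw hvw (sum_adjm_apply hreg) adjm_apply_self
    (adjm_mul_adjm_apply_self hreg) hk2 hk3 hk4 h23 h24 h34 adjm_apply_eq_zero_or_eq_one
end

section
/- Let G be a connected walk-regular graph on n vertices of degree k with distinct eigenvalues k, λ₂, …, λ_t, and suppose some eigenvalue λ_j ≠ k has multiplicity 1. Then n is even and G admits a regular partition into halves with degrees ((k+λ_j)/2, (k−λ_j)/2): the vertex set splits into two parts of size n/2 such that every vertex has (k+λ_j)/2 neighbors in its own part and (k−λ_j)/2 neighbors in the other part. -/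
open Polynomial

/-!
Let `u` be a unit eigenvector for the simple eigenvalue `λⱼ`. The Lagrange basis polynomial `p`
that is `1` at `λⱼ` and `0` at the other eigenvalues gives the spectral projector
`p(A) = u uᵀ`; walk-regularity makes the diagonal of every polynomial in `A` constant, so
`|u v|` is the same for all vertices. Regularity and `λⱼ ≠ k` force `∑ u = 0`, so the vertices
where `u` is positive form exactly half of them. Finally, with `c` the common value of `|u|`,
the eigenvalue equation at `v` multiplied by `u v` reads `(#same side - #other side) c² = λⱼ c²`,
while the two counts add up to `k`.
-/

open Matrix Finset SimpleGraph

namespace Matrix.IsHermitian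
variable {m : Type*} [Fintype m] [DecidableEq m] {A : Matrix m m ℝ}

lemma aeval_apply (hA : A.IsHermitian) (p : ℝ[X]) (v w : m) :
    aeval A p v w =
      ∑ i, p.eval (hA.eigenvalues i) * hA.eigenvectorBasis i v * hA.eigenvectorBasis i w := by
  rw [← cfc_polynomial p A hA.isSelfAdjoint, hA.cfc_eq, IsHermitian.cfc,
    Unitary.conjStarAlgAut_apply, mul_apply]
  simp only [mul_diagonal]
  simp [mul_comm]

lemma exists_aeval_eq_vecMulVec_of_count_roots_eq_one (hA : A.IsHermitian) {μ : ℝ}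
    (h : A.charpoly.roots.count μ = 1) :
    ∃ u : m → ℝ, u ≠ 0 ∧ A *ᵥ u = μ • u ∧ ∃ p : ℝ[X], aeval A p = vecMulVec u u := by
  rw [hA.roots_charpoly_eq_eigenvalues, Multiset.count_map] at h
  obtain ⟨j, hj⟩ : ∃ j, univ.filter (fun i => μ = hA.eigenvalues i) = {j} :=
    card_eq_one.mp (by simpa [card_def, filter_val] using h)
  have hμ : ∀ i, μ = hA.eigenvalues i ↔ i = j := fun i => by
    simpa using Finset.ext_iff.mp hj i
  have hμj : μ = hA.eigenvalues j := (hμ j).2 rfl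
  set s := univ.image hA.eigenvalues
  have hmem : ∀ i, hA.eigenvalues i ∈ s := fun i => mem_image_of_mem _ (mem_univ i)
  refine ⟨hA.eigenvectorBasis j, ?_, ?_, Lagrange.basis s id μ, ?_⟩
  · simpa using hA.eigenvectorBasis.orthonormal.ne_zero j
  · rw [hA.mulVec_eigenvectorBasis, ← hμj]
  · ext v w
    rw [hA.aeval_apply, sum_eq_single j, ← hμj, vecMulVec_apply]
    · rw [show (Lagrange.basis s id μ).eval μ = 1 from
        Lagrange.eval_basis_self (Set.injOn_id _) (hμj ▸ hmem j), one_mul]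
    · intro i _ hij
      rw [show (Lagrange.basis s id μ).eval (hA.eigenvalues i) = 0 from
        Lagrange.eval_basis_of_ne (v := id) (mt (hμ i).1 hij) (hmem i), zero_mul, zero_mul]
    · simp

end Matrix.IsHermitian

lemma Matrix.aeval_apply_self_eq_of_pow_apply_self_eq {m R : Type*} [Fintype m] [DecidableEq m]
    [CommSemiring R] {A : Matrix m m R} {x y : m} (h : ∀ r : ℕ, (A ^ r) x x = (A ^ r) y y)
    (p : R[X]) : aeval A p x x = aeval A p y y := by
  simp only [aeval_eq_sum_range, sum_apply, smul_apply, h]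

lemma mul_eq_ite_of_abs_eq {a b c : ℝ} (ha : |a| = c) (hb : |b| = c) :
    a * b = if (0 < a ↔ 0 < b) then c ^ 2 else -c ^ 2 := by
  subst ha
  rcases abs_eq_abs.mp hb with rfl | rfl
  · simp [sq]
  · rcases lt_trichotomy a 0 with h | rfl | h
    · simp [h.not_gt, h, abs_of_neg h, sq]
    · simp
    · simp [h, h.not_gt, abs_of_pos h, sq]

lemma sum_mul_eq_sq_mul_card_sub_card {V : Type*} (s : Finset V) {u : V → ℝ} {x c : ℝ}
    (hu : ∀ w ∈ s, |u w| = c) (hx : |x| = c) :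
    ∑ w ∈ s, u w * x =
      c ^ 2 * ((#{w ∈ s | 0 < u w ↔ 0 < x} : ℝ) - #{w ∈ s | ¬(0 < u w ↔ 0 < x)}) := by
  rw [sum_congr rfl fun w hw => mul_eq_ite_of_abs_eq (hu w hw) hx, sum_ite, sum_const, sum_const,
    nsmul_eq_mul, nsmul_eq_mul]
  ring

lemma two_mul_ncard_pos_eq_card {V : Type*} [Fintype V] {u : V → ℝ} {c : ℝ}
    (h0 : ∑ v, u v = 0) (hu : ∀ v, |u v| = c) (hc : 0 < c) :
    2 * {v | 0 < u v}.ncard = Fintype.card V := by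
  have h := sum_mul_eq_sq_mul_card_sub_card univ (fun w _ => hu w) (abs_of_pos hc)
  simp only [← sum_mul, h0, zero_mul, hc, iff_true] at h
  have hsplit := card_filter_add_card_filter_not (s := univ) (fun v => 0 < u v)
  have heq : #{v | 0 < u v} = #{v | ¬0 < u v} := by
    exact_mod_cast sub_eq_zero.mp ((mul_eq_zero.mp h.symm).resolve_left (by positivity))
  rw [Set.ncard_eq_toFinset_card', Set.toFinset_ofPred, ← card_univ]
  omega

namespace SimpleGraph
variable {V : Type*} [Fintype V] {G : SimpleGraph V} [DecidableRel G.Adj] {k : ℕ} {μ : ℝ}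
  {u : V → ℝ}

lemma isRegularOfDegree_of_isReg (h : IsReg G k) : G.IsRegularOfDegree k := fun v => by
  rw [← h v, ← card_neighborFinset_eq_degree, neighborFinset, Set.ncard_eq_toFinset_card']

lemma ncard_setOf_adj_and (v : V) (P : V → Prop) [DecidablePred P] :
    {w | G.Adj v w ∧ P w}.ncard = #{w ∈ G.neighborFinset v | P w} := by
  rw [← Set.ncard_coe_finset]
  congr
  ext
  simp

lemma sum_eq_zero_of_adjMatrix_mulVec_eq_smul (hd : G.IsRegularOfDegree k)
    (hu : G.adjMatrix ℝ *ᵥ u = μ • u) (hne : μ ≠ k) : ∑ v, u v = 0 := by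
  have h : Function.const V (1 : ℝ) ⬝ᵥ (G.adjMatrix ℝ *ᵥ u) = k * ∑ v, u v := by
    rw [dotProduct_mulVec, ← mulVec_transpose, transpose_adjMatrix]
    simp [dotProduct, mul_sum, hd.degree_eq]
  rw [hu] at h
  simp only [dotProduct, Function.const_apply, Pi.smul_apply, smul_eq_mul, one_mul, ← mul_sum] at h
  exact (mul_eq_mul_right_iff.mp h).resolve_left hne

lemma two_mul_ncard_adj_sign_split (hd : G.IsRegularOfDegree k)
    (hu : G.adjMatrix ℝ *ᵥ u = μ • u) {c : ℝ} (habs : ∀ v, |u v| = c) (hc : 0 < c) (v : V) :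
    2 * ({w | G.Adj v w ∧ (0 < u w ↔ 0 < u v)}.ncard : ℝ) = k + μ ∧
      2 * ({w | G.Adj v w ∧ ¬(0 < u w ↔ 0 < u v)}.ncard : ℝ) = k - μ := by
  have h := sum_mul_eq_sq_mul_card_sub_card (G.neighborFinset v) (fun w _ => habs w) (habs v)
  rw [← sum_mul, ← adjMatrix_mulVec_apply, hu, Pi.smul_apply, smul_eq_mul, mul_assoc, ← sq,
    ← sq_abs, habs v, mul_comm] at h
  have hdiff := mul_left_cancel₀ (by positivity) h
  have hsum : (#{w ∈ G.neighborFinset v | 0 < u w ↔ 0 < u v} : ℝ) +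
      #{w ∈ G.neighborFinset v | ¬(0 < u w ↔ 0 < u v)} = k := by
    rw [← Nat.cast_add, card_filter_add_card_filter_not, card_neighborFinset_eq_degree,
      hd.degree_eq]
  rw [ncard_setOf_adj_and, ncard_setOf_adj_and]
  constructor <;> linarith

end SimpleGraph

theorem stmt_4_general {n k : ℕ} (G : SimpleGraph (Fin n))
    (hreg : IsReg G k)
    (hwalk : ∀ (r : ℕ) (x y : Fin n), ((adjm G) ^ r) x x = ((adjm G) ^ r) y y)
    (lj : ℝ) (hne : lj ≠ (k : ℝ))
    (hsimple : (spec G).count lj = 1) :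
    Even n ∧
    ∃ V1 : Set (Fin n), 2 * V1.ncard = n ∧
      ∀ v : Fin n,
        2 * ({u | G.Adj v u ∧ (u ∈ V1 ↔ v ∈ V1)}.ncard : ℝ) = (k : ℝ) + lj ∧
        2 * ({u | G.Adj v u ∧ ¬(u ∈ V1 ↔ v ∈ V1)}.ncard : ℝ) = (k : ℝ) - lj := by
  -- the instance under which `adjm G` is `G.adjMatrix ℝ`
  let : DecidableRel G.Adj := Classical.decRel _
  obtain ⟨u, hu0, hAu, p, hp⟩ :=
    (G.isHermitian_adjMatrix ℝ).exists_aeval_eq_vecMulVec_of_count_roots_eq_one hsimple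
  obtain ⟨v₀, hv₀⟩ : ∃ v, u v ≠ 0 := Function.ne_iff.mp hu0
  have habs : ∀ v, |u v| = |u v₀| := fun v => by
    have := (adjm G).aeval_apply_self_eq_of_pow_apply_self_eq (fun r => hwalk r v v₀) p
    simpa only [adjm, hp, vecMulVec_apply, ← sq, sq_eq_sq_iff_abs_eq_abs] using this
  have hc : 0 < |u v₀| := abs_pos.mpr hv₀
  have hd := isRegularOfDegree_of_isReg hreg
  have hhalf :=
    two_mul_ncard_pos_eq_card (sum_eq_zero_of_adjMatrix_mulVec_eq_smul hd hAu hne) habs hc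
  rw [Fintype.card_fin] at hhalf
  exact ⟨⟨{v | 0 < u v}.ncard, by omega⟩, {v | 0 < u v}, hhalf,
    two_mul_ncard_adj_sign_split hd hAu habs hc⟩

/-- Half-partition lemma: if `G` is a connected walk-regular `k`-regular graph on `n`
vertices and `λⱼ ≠ k` is a simple eigenvalue, then `n` is even and the vertices can be
split into two halves so that every vertex has `(k+λⱼ)/2` neighbours in its own part
and `(k-λⱼ)/2` in the other part. -/
theorem stmt_4 {n k : ℕ} (G : SimpleGraph (Fin n))
    (hconn : G.Connected) (hreg : IsReg G k)
    (hwalk : ∀ (r : ℕ) (x y : Fin n), ((adjm G) ^ r) x x = ((adjm G) ^ r) y y)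
    (lj : ℝ) (hmem : lj ∈ spec G) (hne : lj ≠ (k : ℝ))
    (hsimple : (spec G).count lj = 1) :
    Even n ∧
    ∃ V1 : Set (Fin n), 2 * V1.ncard = n ∧
      ∀ v : Fin n,
        2 * ({u | G.Adj v u ∧ (u ∈ V1 ↔ v ∈ V1)}.ncard : ℝ) = (k : ℝ) + lj ∧
        2 * ({u | G.Adj v u ∧ ¬(u ∈ V1 ↔ v ∈ V1)}.ncard : ℝ) = (k : ℝ) - lj :=
  stmt_4_general G hreg hwalk lj hne hsimple
end

section
/- For a graph G on n vertices with adjacency matrix A, the graph G ⊛ J_m with adjacency matrix (A + I_n) ⊗ J_m − I_{nm} has spectrum {[mλ₁+m−1]^{m₁}, …, [mλ_t+m−1]^{m_t}, [−1]^{nm−n}} whenever G has spectrum {[λ₁]^{m₁}, …, [λ_t]^{m_t}}. -/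
open Polynomial

/-!
Both `A + I` and `J_m` are real symmetric, hence unitarily diagonalizable, and the Kronecker
product of the two diagonalizing unitaries diagonalizes `(A + I) ⊗ J_m`; so its eigenvalues are
the products `(λ + 1) μ` of eigenvalues of the factors. Since `J_m` has rank one with trace `m`,
its eigenvalues are `m` once and `0` with multiplicity `m - 1`, and subtracting `I` shifts the
whole spectrum by `-1`.
-/

open Matrix Kronecker

theorem Multiset.map_product_map {α β γ δ : Type*} (s : Multiset α) (t : Multiset β)
    (f : α → γ) (g : β → δ) : s.map f ×ˢ t.map g = (s ×ˢ t).map (Prod.map f g) := by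
  simp [SProd.sprod, Multiset.product, Multiset.map_bind, Multiset.bind_map]

theorem Multiset.map_mul_product_cons_replicate_zero {R : Type*} [MulZeroClass R]
    (s : Multiset R) (c : R) (k : ℕ) :
    (s ×ˢ (c ::ₘ Multiset.replicate k 0)).map (fun p => p.1 * p.2) =
      s.map (· * c) + Multiset.replicate (Multiset.card s * k) 0 := by
  rw [Multiset.product_cons, Multiset.map_add, Multiset.map_map]
  congr 1
  refine Multiset.eq_replicate.mpr ⟨by simp, fun x hx => ?_⟩
  obtain ⟨p, hp, rfl⟩ := Multiset.mem_map.mp hx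
  simp [(Multiset.mem_replicate.mp (Multiset.mem_product.mp hp).2).2]

theorem Polynomial.roots_prod_X_sub_C_univ {R ι : Type*} [CommRing R] [IsDomain R] [Fintype ι]
    (f : ι → R) : (∏ i, (X - C (f i))).roots = Finset.univ.val.map f := by
  rw [roots_prod _ _ (Finset.prod_ne_zero_iff.mpr fun i _ => X_sub_C_ne_zero (f i))]
  simp

namespace Matrix

variable {n : Type*} [Fintype n] [DecidableEq n]

theorem roots_charpoly_sub_scalar {K : Type*} [Field K] (M : Matrix n n K) (c : K) :
    (M - scalar n c).charpoly.roots = M.charpoly.roots.map (· - c) := by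
  rw [charpoly_sub_scalar, ← one_mul X, ← C_1, roots_comp_C_mul_X_add_C _ _ _ isUnit_one]
  simp

theorem roots_charpoly_of_one {K : Type*} [Field K] [Nonempty n] :
    (of fun _ _ : n => (1 : K)).charpoly.roots =
      (Fintype.card n : K) ::ₘ Multiset.replicate (Fintype.card n - 1) 0 := by
  have hJ : (of fun _ _ : n => (1 : K)) = vecMulVec 1 1 := by ext; simp [vecMulVec]
  have hfac : (X : K[X]) ^ Fintype.card n - ((1 : n → K) ⬝ᵥ 1) • X ^ (Fintype.card n - 1)
      = (X - C (Fintype.card n : K)) * X ^ (Fintype.card n - 1) := by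
    rw [sub_mul, ← pow_succ', Nat.sub_add_cancel Fintype.card_pos, smul_eq_C_mul]
    simp
  rw [hJ, charpoly_vecMulVec, hfac, roots_mul, roots_X_sub_C, roots_X_pow]
  · rw [Multiset.nsmul_singleton, Multiset.singleton_add]
  · exact ((monic_X_sub_C _).mul (monic_X.pow _)).ne_zero

theorem IsHermitian.roots_charpoly_kronecker {𝕜 : Type*} [RCLike 𝕜]
    {m : Type*} [Fintype m] [DecidableEq m] {A : Matrix n n 𝕜} {B : Matrix m m 𝕜}
    (hA : A.IsHermitian) (hB : B.IsHermitian) :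
    (A ⊗ₖ B).charpoly.roots =
      (A.charpoly.roots ×ˢ B.charpoly.roots).map fun p => p.1 * p.2 := by
  set U := (hA.eigenvectorUnitary : Matrix n n 𝕜)
  set V := (hB.eigenvectorUnitary : Matrix m m 𝕜)
  set D := diagonal (RCLike.ofReal ∘ hA.eigenvalues : n → 𝕜)
  set E := diagonal (RCLike.ofReal ∘ hB.eigenvalues : m → 𝕜)
  have hAB : A ⊗ₖ B = (U ⊗ₖ V) * (D ⊗ₖ E) * (star U ⊗ₖ star V) := by
    conv_lhs => rw [hA.spectral_theorem, hB.spectral_theorem]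
    simp only [Unitary.conjStarAlgAut_apply, mul_kronecker_mul]
    rfl
  have hUV : (star U ⊗ₖ star V) * (U ⊗ₖ V) = 1 := by
    rw [← mul_kronecker_mul, Unitary.coe_star_mul_self, Unitary.coe_star_mul_self,
      one_kronecker_one]
  rw [hAB, charpoly_mul_comm, ← mul_assoc, hUV, one_mul, diagonal_kronecker_diagonal,
    charpoly_diagonal, roots_prod_X_sub_C_univ, hA.roots_charpoly_eq_eigenvalues,
    hB.roots_charpoly_eq_eigenvalues, Multiset.map_product_map, Multiset.map_map,
    ← Finset.product_val, Finset.univ_product_univ]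
  rfl

end Matrix

theorem isHermitian_adjm_s7 {V : Type*} [Fintype V] [DecidableEq V] (G : SimpleGraph V) :
    (adjm G).IsHermitian :=
  @SimpleGraph.isHermitian_adjMatrix _ ℝ G (Classical.decRel _) _ _

theorem card_spec {V : Type*} [Fintype V] [DecidableEq V] (G : SimpleGraph V) :
    Multiset.card (spec G) = Fintype.card V := by
  simp [spec, (isHermitian_adjm_s7 G).roots_charpoly_eq_eigenvalues]

open Kronecker in
/-- Spectrum of the clique blow-up `G ⊛ J_m`: if `A` is the adjacency matrix of `G` on
`n` vertices, the matrix `(A + I) ⊗ J_m - I` has as eigenvalue multiset the image of the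
spectrum of `G` under `λ ↦ mλ + m - 1` together with `-1` with multiplicity `nm - n`. -/
theorem stmt_7 {n m : ℕ} (hm : 0 < m) (G : SimpleGraph (Fin n)) :
    ((adjm G + 1) ⊗ₖ (Matrix.of fun _ _ : Fin m => (1 : ℝ)) -
        (1 : Matrix (Fin n × Fin m) (Fin n × Fin m) ℝ)).charpoly.roots =
      (spec G).map (fun x : ℝ => (m : ℝ) * x + m - 1) +
        Multiset.replicate (n * m - n) (-1) := by
  have : Nonempty (Fin m) := Fin.pos_iff_nonempty.mp hm
  have hA : (adjm G + 1).IsHermitian := (isHermitian_adjm_s7 G).add isHermitian_one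
  have hJ : (of fun _ _ : Fin m => (1 : ℝ)).IsHermitian := by ext; simp
  have hA1 : (adjm G + 1).charpoly.roots = (spec G).map (· + 1) := by
    simpa [spec, sub_eq_add_neg] using roots_charpoly_sub_scalar (adjm G) (-1)
  have hsub_one := roots_charpoly_sub_scalar ((adjm G + 1) ⊗ₖ (of fun _ _ : Fin m => (1 : ℝ))) 1
  rw [map_one] at hsub_one
  rw [hsub_one, hA.roots_charpoly_kronecker hJ, hA1, roots_charpoly_of_one,
    Multiset.map_mul_product_cons_replicate_zero, Multiset.map_add, Multiset.map_map,
    Multiset.map_map, Multiset.map_replicate, Multiset.card_map, card_spec]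
  congr 1
  · congr 1
    funext x
    simp only [Fintype.card_fin, Function.comp_apply, sub_left_inj]
    ring
  · simp [Nat.mul_sub_one]
end

section
/- Let k, α ∈ ℝ, n, m ∈ ℤ with β ≠ −1, where k + α + (n−2−m)β − m = 0 and k² + α² + (n−2−m)β² + m = kn. Then n − k − α − 2 ≠ 0, β = (kn − k² − k − α² − α)/(n − k − α − 2), and m = n − 1 + (n−k−1)(n−2α−2)/(k² + (2−n)k + α² + 2α − n + 2). -/
/-!
Write `s = n - 2 - m` for the multiplicity of `β`. The first trace equation gives
`s (β + 1) = n - k - α - 2`, and the sum of both gives `s β (β + 1) = kn - k² - k - α² - α`.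
Eliminating `s` expresses the numerator of `β` as `β (n - k - α - 2)` and the denominator of the
formula for `m` as `-(β + 1)(n - k - α - 2)`. If `n - k - α - 2` vanished, the numerator would
vanish too, but with `n = k + α + 2` it equals `(α + 1)(k - α) ≠ 0`.
-/

section TraceEquations

variable {K : Type*} [Field K] {k a b n m : K}

theorem traceEq_mul_add_one (h1 : k + a + (n - 2 - m) * b - m = 0) :
    (n - 2 - m) * (b + 1) = n - k - a - 2 := by
  linear_combination h1

theorem traceEq_mul_mul_add_one (h1 : k + a + (n - 2 - m) * b - m = 0)
    (h2 : k ^ 2 + a ^ 2 + (n - 2 - m) * b ^ 2 + m = k * n) :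
    (n - 2 - m) * b * (b + 1) = k * n - k ^ 2 - k - a ^ 2 - a := by
  linear_combination h1 + h2

theorem traceEq_numerator_eq (h1 : k + a + (n - 2 - m) * b - m = 0)
    (h2 : k ^ 2 + a ^ 2 + (n - 2 - m) * b ^ 2 + m = k * n) :
    k * n - k ^ 2 - k - a ^ 2 - a = b * (n - k - a - 2) := by
  linear_combination b * traceEq_mul_add_one h1 - traceEq_mul_mul_add_one h1 h2

theorem traceEq_denominator_eq (h1 : k + a + (n - 2 - m) * b - m = 0)
    (h2 : k ^ 2 + a ^ 2 + (n - 2 - m) * b ^ 2 + m = k * n) :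
    k ^ 2 + (2 - n) * k + a ^ 2 + 2 * a - n + 2 = -((b + 1) * (n - k - a - 2)) := by
  linear_combination traceEq_mul_mul_add_one h1 h2 - b * traceEq_mul_add_one h1

theorem traceEq_sub_ne_zero (h1 : k + a + (n - 2 - m) * b - m = 0)
    (h2 : k ^ 2 + a ^ 2 + (n - 2 - m) * b ^ 2 + m = k * n) (ha : a ≠ -1) (hka : k ≠ a) :
    n - k - a - 2 ≠ 0 := by
  intro h0
  have hprod : (a + 1) * (k - a) = 0 := by
    linear_combination traceEq_numerator_eq h1 h2 + (b - k) * h0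
  exact mul_ne_zero (fun h => ha (eq_neg_of_add_eq_zero_left h)) (sub_ne_zero.mpr hka) hprod

theorem traceEq_denominator_ne_zero (h1 : k + a + (n - 2 - m) * b - m = 0)
    (h2 : k ^ 2 + a ^ 2 + (n - 2 - m) * b ^ 2 + m = k * n) (hb : b ≠ -1)
    (hn : n - k - a - 2 ≠ 0) :
    k ^ 2 + (2 - n) * k + a ^ 2 + 2 * a - n + 2 ≠ 0 := by
  rw [traceEq_denominator_eq h1 h2]
  exact neg_ne_zero.mpr (mul_ne_zero (fun h => hb (eq_neg_of_add_eq_zero_left h)) hn)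

theorem traceEq_eq_div (h1 : k + a + (n - 2 - m) * b - m = 0)
    (h2 : k ^ 2 + a ^ 2 + (n - 2 - m) * b ^ 2 + m = k * n) (hn : n - k - a - 2 ≠ 0) :
    b = (k * n - k ^ 2 - k - a ^ 2 - a) / (n - k - a - 2) := by
  rw [traceEq_numerator_eq h1 h2, mul_div_cancel_right₀ b hn]

theorem traceEq_mult_eq (h1 : k + a + (n - 2 - m) * b - m = 0)
    (h2 : k ^ 2 + a ^ 2 + (n - 2 - m) * b ^ 2 + m = k * n)
    (hE : k ^ 2 + (2 - n) * k + a ^ 2 + 2 * a - n + 2 ≠ 0) :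
    m = n - 1 + (n - k - 1) * (n - 2 * a - 2) / (k ^ 2 + (2 - n) * k + a ^ 2 + 2 * a - n + 2) := by
  rw [← sub_eq_iff_eq_add', eq_div_iff hE]
  linear_combination -(n - 2 - m) * traceEq_denominator_eq h1 h2 +
    (n - k - a - 2) * traceEq_mul_add_one h1

end TraceEquations

theorem stmt_11_general (k a b : ℝ) (n m : ℤ)
    (hka : k ≠ a)
    (ha : a ≠ -1) (hb : b ≠ -1)
    (h1 : k + a + ((n : ℝ) - 2 - m) * b - m = 0)
    (h2 : k ^ 2 + a ^ 2 + ((n : ℝ) - 2 - m) * b ^ 2 + m = k * n) :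
    (n : ℝ) - k - a - 2 ≠ 0 ∧
    b = (k * n - k ^ 2 - k - a ^ 2 - a) / ((n : ℝ) - k - a - 2) ∧
    k ^ 2 + (2 - (n : ℝ)) * k + a ^ 2 + 2 * a - n + 2 ≠ 0 ∧
    (m : ℝ) = (n : ℝ) - 1 +
      ((n : ℝ) - k - 1) * ((n : ℝ) - 2 * a - 2) /
        (k ^ 2 + (2 - (n : ℝ)) * k + a ^ 2 + 2 * a - n + 2) := by
  have hn := traceEq_sub_ne_zero h1 h2 ha hka
  have hE := traceEq_denominator_ne_zero h1 h2 hb hn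
  exact ⟨hn, traceEq_eq_div h1 h2 hn, hE, traceEq_mult_eq h1 h2 hE⟩

/-- From the trace equations of a `k`-regular graph on `n` vertices with spectrum
`{[k]^1, [α]^1, [β]^{n-2-m}, [-1]^m}` (the four eigenvalues pairwise distinct,
`2 ≤ m ≤ n-4`), one gets `n - k - α - 2 ≠ 0`, the formula for `β`, and the formula
for `m` (whose denominator is nonzero). -/
theorem stmt_11 (k a b : ℝ) (n m : ℤ)
    (hm1 : 2 ≤ m) (hm2 : m ≤ n - 4)
    (hka : k ≠ a) (hkb : k ≠ b) (hab : a ≠ b)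
    (hk : k ≠ -1) (ha : a ≠ -1) (hb : b ≠ -1)
    (h1 : k + a + ((n : ℝ) - 2 - m) * b - m = 0)
    (h2 : k ^ 2 + a ^ 2 + ((n : ℝ) - 2 - m) * b ^ 2 + m = k * n) :
    (n : ℝ) - k - a - 2 ≠ 0 ∧
    b = (k * n - k ^ 2 - k - a ^ 2 - a) / ((n : ℝ) - k - a - 2) ∧
    k ^ 2 + (2 - (n : ℝ)) * k + a ^ 2 + 2 * a - n + 2 ≠ 0 ∧
    (m : ℝ) = (n : ℝ) - 1 +
      ((n : ℝ) - k - 1) * ((n : ℝ) - 2 * a - 2) /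
        (k ^ 2 + (2 - (n : ℝ)) * k + a ^ 2 + 2 * a - n + 2) :=
  stmt_11_general k a b n m hka ha hb h1 h2
end

section
/- Let n, k, α be integers with 3 ≤ k ≤ n−2, α ≥ 1, and β = −(k(n−k)+(k−1)α−1)/((n−2)α+k−1) ≤ −2 a (rational) number such that c := −2(1+α)(1+β)/n is a positive integer. Then c < 4. -/
/-!
Clearing denominators, `1 + β = -(n - k - 1)(k - α) / D` with `D = (n - 2)α + k - 1`, so
`c · n · D = 2 (1 + α)(n - k - 1)(k - α)`. If `α ≥ k` the right side is nonpositive; otherwise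
`(1 + α)(k - α) < D` (this is where `k ≤ n - 2` enters) and `n - k - 1 < n`, so `c < 2`.
-/

section

variable {n k a : ℝ}

lemma denom_pos (hk : 1 ≤ k) (hkn : k ≤ n - 2) (ha : 1 ≤ a) : 0 < (n - 2) * a + k - 1 := by
  nlinarith

lemma one_add_beta_eq (hD : (n - 2) * a + k - 1 ≠ 0) :
    1 + -(k * (n - k) + (k - 1) * a - 1) / ((n - 2) * a + k - 1) =
      -((n - k - 1) * (k - a)) / ((n - 2) * a + k - 1) := by
  rw [one_add_div hD]
  congr 1
  ring

lemma one_add_mul_sub_lt_denom (hkn : k ≤ n - 2) (ha : 1 ≤ a) :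
    (1 + a) * (k - a) < (n - 2) * a + k - 1 := by
  nlinarith

lemma one_add_mul_mul_sub_lt (hk : 1 ≤ k) (hkn : k ≤ n - 2) (ha : 1 ≤ a) :
    (1 + a) * (n - k - 1) * (k - a) < n * ((n - 2) * a + k - 1) := by
  have hD := denom_pos hk hkn ha
  have hn : 0 < n := by linarith
  rcases le_or_gt k a with hka | hak
  · have : (1 + a) * (n - k - 1) * (k - a) ≤ 0 :=
      mul_nonpos_of_nonneg_of_nonpos (mul_nonneg (by linarith) (by linarith)) (by linarith)
    linarith [mul_pos hn hD]
  · calc (1 + a) * (n - k - 1) * (k - a) = ((1 + a) * (k - a)) * (n - k - 1) := by ring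
      _ < ((n - 2) * a + k - 1) * n :=
        mul_lt_mul (one_add_mul_sub_lt_denom hkn ha) (by linarith) (by linarith) hD.le
      _ = n * ((n - 2) * a + k - 1) := by ring

lemma neg_two_mul_one_add_mul_one_add_beta_div_lt_two (hk : 1 ≤ k) (hkn : k ≤ n - 2)
    (ha : 1 ≤ a) :
    -2 * (1 + a) * (1 + -(k * (n - k) + (k - 1) * a - 1) / ((n - 2) * a + k - 1)) / n < 2 := by
  have hD := denom_pos hk hkn ha
  have hn : 0 < n := by linarith
  rw [one_add_beta_eq hD.ne', div_lt_iff₀ hn, mul_div_assoc', div_lt_iff₀ hD]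
  linarith [one_add_mul_mul_sub_lt hk hkn ha]

end

theorem stmt_14_general (n k a : ℤ) (hk1 : 3 ≤ k) (hk2 : k ≤ n - 2) (ha : 1 ≤ a)
    (b : ℝ)
    (hb : b = -((k : ℝ) * ((n : ℝ) - k) + ((k : ℝ) - 1) * a - 1) /
      (((n : ℝ) - 2) * a + k - 1))
    (c : ℤ) (hc : (c : ℝ) = -2 * (1 + (a : ℝ)) * (1 + b) / n) :
    c < 4 := by
  have hk : (1 : ℝ) ≤ k := by exact_mod_cast (by omega : 1 ≤ k)
  have hkn : (k : ℝ) ≤ n - 2 := by exact_mod_cast hk2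
  have ha' : (1 : ℝ) ≤ a := by exact_mod_cast ha
  have hc2 : (c : ℝ) < 2 := by
    rw [hc, hb]
    exact neg_two_mul_one_add_mul_one_add_beta_div_lt_two hk hkn ha'
  have : c < 2 := by exact_mod_cast hc2
  omega

/-- If `3 ≤ k ≤ n-2`, `α ≥ 1`, `β = -(k(n-k)+(k-1)α-1)/((n-2)α+k-1) ≤ -2`, and
`c = -2(1+α)(1+β)/n` is a positive integer, then `c < 4`. -/
theorem stmt_14 (n k a : ℤ) (hk1 : 3 ≤ k) (hk2 : k ≤ n - 2) (ha : 1 ≤ a)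
    (b : ℝ)
    (hb : b = -((k : ℝ) * ((n : ℝ) - k) + ((k : ℝ) - 1) * a - 1) /
      (((n : ℝ) - 2) * a + k - 1))
    (hb2 : b ≤ -2)
    (c : ℤ) (hc : (c : ℝ) = -2 * (1 + (a : ℝ)) * (1 + b) / n) (hcpos : 0 < c) :
    c < 4 :=
  stmt_14_general n k a hk1 hk2 ha b hb c hc
end

section
/- For s ≥ 3 and t ≥ 1, the complement of K_{s,s}^− ⊛ J_t is a connected st-regular graph on 2st vertices with spectrum {[st]^1, [st−2t]^1, [−2t]^{s−1}, [0]^{2st−s−1}}; in particular it has four distinct eigenvalues, exactly two simple, and 0 as a non-simple eigenvalue. -/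
open Polynomial

/-- The clique blow-up `G ⊛ J_t`. -/
def blowup {V : Type*} (G : SimpleGraph V) (t : ℕ) : SimpleGraph (V × Fin t) where
  Adj x y := G.Adj x.1 y.1 ∨ (x.1 = y.1 ∧ x.2 ≠ y.2)
  symm := by
    constructor
    rintro ⟨u, i⟩ ⟨v, j⟩ (h | ⟨h, hij⟩)
    · exact Or.inl h.symm
    · exact Or.inr ⟨h.symm, hij.symm⟩
  loopless := by constructor; rintro ⟨u, i⟩ (h | ⟨-, h⟩) <;> simp_all

/-- `K_{s,s}⁻`: the complete bipartite graph `K_{s,s}` minus a perfect matching. -/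
def KssMinus (s : ℕ) : SimpleGraph (Fin s ⊕ Fin s) where
  Adj x y :=
    match x, y with
    | .inl i, .inr j => i ≠ j
    | .inr i, .inl j => i ≠ j
    | _, _ => False
  symm := by constructor; rintro (i | i) (j | j) h <;> simp_all <;> exact fun e => h e.symm
  loopless := by constructor; rintro (i | i) h <;> simp_all

/-! The complement of `G ⊛ J_t` only sees first coordinates: it is `Gᶜ` with every vertex replaced
by an independent set of size `t`, so its adjacency matrix is `A(Gᶜ) ⊗ J_t`. For `G = K_{s,s}⁻`
the complement is the prism `K_2 □ K_s`, with adjacency matrix `[[J - I, I], [I, J - I]]`. Conjugating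
by `[[P, P], [P, -P]]`, where `P` conjugates `J_s` to `diag(s, 0, …, 0)`, diagonalises this block
matrix as `diag(s, 0, …, 0, s - 2, -2, …, -2)`, and Kronecker products of diagonalisations multiply
the eigenvalues; this yields the whole spectrum. -/

open Matrix Polynomial SimpleGraph Kronecker

namespace Matrix

variable {m n : Type*} [Fintype m] [DecidableEq m] [Fintype n] [DecidableEq n]

def HasEigenbasis {R : Type*} [CommRing R] (A : Matrix m m R) (d : m → R) : Prop :=
  ∃ P Q : Matrix m m R, P * Q = 1 ∧ A * P = P * diagonal d

section CommRing

variable {R : Type*} [CommRing R]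

lemma HasEigenbasis.charpoly_eq {A : Matrix m m R} {d : m → R} (h : A.HasEigenbasis d) :
    A.charpoly = ∏ i, (X - C (d i)) := by
  obtain ⟨P, Q, hPQ, hAP⟩ := h
  have hA : A = P * (diagonal d * Q) := by
    rw [← mul_assoc, ← hAP, mul_assoc, hPQ, mul_one]
  rw [hA, charpoly_mul_comm, mul_assoc, mul_eq_one_comm.mp hPQ, mul_one, charpoly_diagonal]

lemma HasEigenbasis.kronecker {A : Matrix m m R} {B : Matrix n n R} {d : m → R} {e : n → R}
    (hA : A.HasEigenbasis d) (hB : B.HasEigenbasis e) :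
    (A ⊗ₖ B).HasEigenbasis fun p => d p.1 * e p.2 := by
  obtain ⟨P, Q, hPQ, hAP⟩ := hA
  obtain ⟨P', Q', hPQ', hBP'⟩ := hB
  refine ⟨P ⊗ₖ P', Q ⊗ₖ Q', ?_, ?_⟩
  · rw [← mul_kronecker_mul, hPQ, hPQ', one_kronecker_one]
  · rw [← mul_kronecker_mul, hAP, hBP', mul_kronecker_mul, diagonal_kronecker_diagonal]

end CommRing

variable {K : Type*} [Field K] [CharZero K]

lemma HasEigenbasis.fromBlocks_sub_one {A : Matrix m m K} {d : m → K} (h : A.HasEigenbasis d) :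
    (fromBlocks (A - 1) 1 1 (A - 1)).HasEigenbasis (Sum.elim d fun i => d i - 2) := by
  obtain ⟨P, Q, hPQ, hAP⟩ := h
  refine ⟨fromBlocks P P P (-P), (2⁻¹ : K) • fromBlocks Q Q Q (-Q), ?_, ?_⟩
  · rw [Matrix.mul_smul, fromBlocks_multiply]
    simp only [Matrix.mul_neg, Matrix.neg_mul, neg_neg, hPQ, add_neg_cancel, fromBlocks_smul,
      smul_zero, ← two_smul K (1 : Matrix m m K), smul_smul, inv_mul_cancel₀ (two_ne_zero' K),
      one_smul, fromBlocks_one]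
  · have hdiag : diagonal (fun i => d i - 2) = diagonal d - (2 : K) • 1 := by
      rw [smul_one_eq_diagonal, diagonal_sub]
    rw [← fromBlocks_diagonal, hdiag, fromBlocks_multiply, fromBlocks_multiply]
    simp only [Matrix.sub_mul, Matrix.one_mul, hAP, Matrix.mul_zero, Matrix.mul_sub, Matrix.mul_neg,
      Matrix.neg_mul, Matrix.mul_smul, Matrix.mul_one, add_zero, zero_add]
    congr 1 <;> module

lemma hasEigenbasis_vecMulVec_one_one (i₀ : m) :
    (vecMulVec (1 : m → K) 1).HasEigenbasis (Pi.single i₀ (Fintype.card m : K)) := by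
  have : Nonempty m := ⟨i₀⟩
  set n : K := (Fintype.card m : K)
  set e : m → K := Pi.single i₀ 1
  have hn : n ≠ 0 := Nat.cast_ne_zero.mpr Fintype.card_ne_zero
  have h11 : (1 : m → K) ⬝ᵥ 1 = n := one_dotProduct_one
  have h1e : 1 ⬝ᵥ e = 1 := by simp [e]
  have he1 : e ⬝ᵥ 1 = 1 := by simp [e]
  have hee : e ⬝ᵥ e = 1 := by simp [e]
  have hD : diagonal (Pi.single i₀ n) = n • vecMulVec e e := by
    rw [diagonal_single, ← single_eq_single_vecMulVec_single, smul_single, smul_eq_mul, mul_one]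
  -- the columns of the first witness are `1` (at `i₀`) and `e_j - e_{i₀}` (at `j ≠ i₀`)
  refine ⟨1 + vecMulVec 1 e - vecMulVec e 1,
    1 - n⁻¹ • vecMulVec 1 1 + (2 * n⁻¹) • vecMulVec e 1 - vecMulVec e e, ?_, ?_⟩
  · simp only [mul_add, add_mul, mul_sub, sub_mul, Matrix.mul_smul, vecMulVec_mul_vecMulVec,
      vecMulVec_smul, h11, h1e, he1, hee, Matrix.one_mul, Matrix.mul_one, one_smul]
    match_scalars <;> field_simp <;> ring
  · simp only [hD, mul_add, mul_sub, add_mul, sub_mul, Matrix.mul_smul, vecMulVec_mul_vecMulVec,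
      vecMulVec_smul, h11, h1e, hee, Matrix.one_mul, Matrix.mul_one, one_smul]
    module

end Matrix

lemma Fintype.prod_apply_pi_single {ι M N : Type*} [Fintype ι] [DecidableEq ι] [Zero M]
    [CommMonoid N] (i₀ : ι) (c : M) (g : M → N) :
    ∏ i, g ((Pi.single i₀ c : ι → M) i) = g c * g 0 ^ (Fintype.card ι - 1) := by
  rw [Fintype.prod_eq_mul_prod_compl i₀, Pi.single_eq_same,
    Finset.prod_congr rfl fun i hi => by rw [Pi.single_eq_of_ne (by simpa using hi)],
    Finset.prod_const, Finset.card_compl, Finset.card_singleton]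

lemma Multiset.card_toFinset_and_count_of_nodup {α : Type*} [DecidableEq α] {a b c z : α}
    {k l : ℕ} {M : Multiset α} (hM : M = {a, b} + replicate k c + replicate l z) (hk : k ≠ 0)
    (hl : l ≠ 0) (h : [a, b, c, z].Nodup) :
    M.toFinset.card = 4 ∧ M.count a = 1 ∧ M.count b = 1 ∧ M.count z = l := by
  have hMfin : M.toFinset = [a, b, c, z].toFinset := by
    ext x
    simp [hM, hk, hl]
  rw [hMfin, List.toFinset_card_of_nodup h]
  simp only [List.nodup_cons, List.mem_cons, List.not_mem_nil, not_or] at h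
  obtain ⟨⟨hab, hac, haz, -⟩, ⟨hbc, hbz, -⟩, ⟨hcz, -⟩, -⟩ := h
  refine ⟨rfl, ?_, ?_, ?_⟩
  · simp [hM, count_replicate, hab, Ne.symm hac, Ne.symm haz]
  · simp [hM, count_replicate, Ne.symm hab, Ne.symm hbc, Ne.symm hbz]
  · simp [hM, count_replicate, Ne.symm haz, Ne.symm hbz, hcz]

section Blowup

variable {V : Type*} (G : SimpleGraph V) (t : ℕ)

lemma compl_blowup_adj (x y : V × Fin t) : (blowup G t)ᶜ.Adj x y ↔ Gᶜ.Adj x.1 y.1 := by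
  obtain ⟨u, a⟩ := x
  obtain ⟨v, b⟩ := y
  rw [compl_adj, compl_adj]
  simp only [blowup, ne_eq, Prod.mk.injEq]
  by_cases h : u = v
  · subst h
    simp
  · simp [h]

lemma neighborSet_compl_blowup (x : V × Fin t) :
    (blowup G t)ᶜ.neighborSet x = Gᶜ.neighborSet x.1 ×ˢ Set.univ := by
  ext y
  simp only [mem_neighborSet, compl_blowup_adj, Set.mem_prod, Set.mem_univ, and_true]

lemma isReg_compl_blowup {k : ℕ} (h : IsReg Gᶜ k) : IsReg (blowup G t)ᶜ (k * t) := fun x => by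
  rw [neighborSet_compl_blowup, Set.ncard_prod, h, Set.ncard_univ, Nat.card_eq_fintype_card,
    Fintype.card_fin]

lemma adjm_compl_blowup [Fintype V] [DecidableEq V] :
    adjm (blowup G t)ᶜ = adjm Gᶜ ⊗ₖ vecMulVec 1 1 := by
  ext x y
  simp only [adjm, adjMatrix_apply, kroneckerMap_apply, vecMulVec_apply, Pi.one_apply, mul_one]
  congr 1
  exact propext (compl_blowup_adj G t x y)

variable {G t}

lemma reachable_compl_blowup (hadj : ∀ u, ∃ v, Gᶜ.Adj u v) {u v : V} (huv : Gᶜ.Reachable u v)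
    (a b : Fin t) : (blowup G t)ᶜ.Reachable (u, a) (v, b) := by
  rw [reachable_iff_reflTransGen] at huv
  induction huv generalizing b with
  | refl =>
    -- `(u, a)` and `(u, b)` are not adjacent, but have the common neighbour `(w, a)`
    obtain ⟨w, huw⟩ := hadj u
    exact ((compl_blowup_adj G t (u, a) (w, a)).mpr huw).reachable.trans
      ((compl_blowup_adj G t (w, a) (u, b)).mpr huw.symm).reachable
  | tail _ hwv ih => exact (ih a).trans ((compl_blowup_adj G t _ (_, b)).mpr hwv).reachable

lemma connected_compl_blowup [NeZero t] (hG : Gᶜ.Connected) (hadj : ∀ u, ∃ v, Gᶜ.Adj u v) :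
    (blowup G t)ᶜ.Connected := by
  obtain ⟨u⟩ := hG.nonempty
  refine (connected_iff_exists_forall_reachable _).mpr ⟨(u, 0), fun ⟨v, b⟩ => ?_⟩
  exact reachable_compl_blowup hadj (hG u v) 0 b

end Blowup

section KssMinus

variable (s : ℕ)

section Adj

variable {s} (i j : Fin s)

@[simp] lemma kssMinus_not_adj_inl_inl : ¬(KssMinus s).Adj (.inl i) (.inl j) := id
@[simp] lemma kssMinus_not_adj_inr_inr : ¬(KssMinus s).Adj (.inr i) (.inr j) := id
@[simp] lemma kssMinus_adj_inl_inr : (KssMinus s).Adj (.inl i) (.inr j) ↔ i ≠ j := Iff.rfl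
@[simp] lemma kssMinus_adj_inr_inl : (KssMinus s).Adj (.inr i) (.inl j) ↔ i ≠ j := Iff.rfl

end Adj

def complKssMinusIsoPrism :
    (⊤ : SimpleGraph Bool).boxProd (⊤ : SimpleGraph (Fin s)) ≃g (KssMinus s)ᶜ where
  toEquiv := Equiv.boolProdEquivSum (Fin s)
  map_rel_iff' := by
    rintro ⟨_ | _, i⟩ ⟨_ | _, j⟩ <;> simp [boxProd_adj]

lemma connected_compl_kssMinus [NeZero s] : (KssMinus s)ᶜ.Connected :=
  (complKssMinusIsoPrism s).connected_iff.mp (connected_top.boxProd connected_top)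

lemma isReg_compl_kssMinus : IsReg (KssMinus s)ᶜ s := by
  classical
  intro v
  obtain ⟨⟨b, i⟩, rfl⟩ := (complKssMinusIsoPrism s).surjective v
  rw [Set.ncard_eq_toFinset_card', ← neighborFinset, card_neighborFinset_eq_degree, Iso.degree_eq,
    degree_boxProd, complete_graph_degree, complete_graph_degree, Fintype.card_bool,
    Fintype.card_fin]
  have := i.pos
  omega

lemma exists_compl_kssMinus_adj (u : Fin s ⊕ Fin s) : ∃ v, (KssMinus s)ᶜ.Adj u v :=
  ⟨u.swap, by cases u <;> simp⟩

lemma adjm_compl_kssMinus :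
    adjm (KssMinus s)ᶜ = fromBlocks (vecMulVec 1 1 - 1) 1 1 (vecMulVec 1 1 - 1) := by
  ext (i | i) (j | j) <;>
    simp only [adjm, adjMatrix_apply, fromBlocks_apply₁₁, fromBlocks_apply₁₂, fromBlocks_apply₂₁,
      fromBlocks_apply₂₂, Matrix.sub_apply, vecMulVec_apply, Pi.one_apply, one_apply] <;>
    split_ifs <;> simp_all

variable (t : ℕ) [NeZero s] [NeZero t]

lemma charpoly_adjm_compl_blowup_kssMinus :
    (adjm (blowup (KssMinus s) t)ᶜ).charpoly =
      (X - C ((s : ℝ) * t)) * (X - C ((s : ℝ) * t - 2 * t)) * (X - C (-2 * (t : ℝ))) ^ (s - 1) *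
        X ^ (s - 1 + 2 * s * (t - 1)) := by
  have h := (hasEigenbasis_vecMulVec_one_one (K := ℝ) (0 : Fin s)).fromBlocks_sub_one.kronecker
    (hasEigenbasis_vecMulVec_one_one (K := ℝ) (0 : Fin t))
  rw [adjm_compl_blowup, adjm_compl_kssMinus, h.charpoly_eq, Fintype.prod_prod_type]
  simp only [Fintype.card_fin]
  set d : Fin s ⊕ Fin s → ℝ :=
    Sum.elim (Pi.single 0 (s : ℝ)) fun i => (Pi.single 0 (s : ℝ) : Fin s → ℝ) i - 2
  rw [Finset.prod_congr rfl fun u _ =>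
    Fintype.prod_apply_pi_single 0 (t : ℝ) fun c => X - C (d u * c)]
  simp only [mul_zero, map_zero, sub_zero, Finset.prod_mul_distrib, Finset.prod_const,
    Finset.card_univ, Fintype.card_sum, Fintype.card_fin, Fintype.prod_sum_type, d, Sum.elim_inl,
    Sum.elim_inr]
  rw [Fintype.prod_apply_pi_single 0 (s : ℝ) fun c => X - C (c * t),
    Fintype.prod_apply_pi_single 0 (s : ℝ) fun c => X - C ((c - 2) * t)]
  simp only [Fintype.card_fin, map_mul, map_sub, map_neg, map_zero, map_natCast, map_ofNat]
  ring

lemma spec_compl_blowup_kssMinus :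
    spec (blowup (KssMinus s) t)ᶜ =
      {(s : ℝ) * t, (s : ℝ) * t - 2 * t} + Multiset.replicate (s - 1) (-2 * (t : ℝ)) +
        Multiset.replicate (2 * s * t - s - 1) 0 := by
  have hexp : 2 * s * t - s - 1 = s - 1 + 2 * s * (t - 1) := by
    obtain ⟨t, rfl⟩ : ∃ t', t = t' + 1 := ⟨t - 1, by have := NeZero.ne t; omega⟩
    have := NeZero.ne s
    rw [Nat.add_sub_cancel, mul_add, mul_one]
    omega
  rw [spec, charpoly_adjm_compl_blowup_kssMinus, hexp, ← roots_multiset_prod_X_sub_C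
    ({(s : ℝ) * t, (s : ℝ) * t - 2 * t} + Multiset.replicate (s - 1) (-2 * (t : ℝ)) +
      Multiset.replicate (s - 1 + 2 * s * (t - 1)) 0)]
  simp only [Multiset.map_add, Multiset.prod_add, Multiset.map_replicate, Multiset.prod_replicate,
    Multiset.insert_eq_cons, Multiset.map_cons, Multiset.map_singleton, Multiset.prod_cons,
    Multiset.prod_singleton, map_zero, sub_zero]

end KssMinus

/-- For `s ≥ 3`, `t ≥ 1`, the complement of `K_{s,s}⁻ ⊛ J_t` is a connected
`st`-regular graph on `2st` vertices with spectrum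
`{[st]^1, [st-2t]^1, [-2t]^{s-1}, [0]^{2st-s-1}}`; in particular it has four distinct
eigenvalues, exactly two of them simple, and `0` as a non-simple eigenvalue. -/
theorem stmt_19 (s t : ℕ) (hs : 3 ≤ s) (ht : 1 ≤ t) :
    (blowup (KssMinus s) t)ᶜ.Connected ∧
    IsReg (blowup (KssMinus s) t)ᶜ (s * t) ∧
    spec (blowup (KssMinus s) t)ᶜ =
      {((s : ℝ) * t : ℝ), ((s : ℝ) * t - 2 * t : ℝ)} +
        Multiset.replicate (s - 1) (-2 * (t : ℝ)) +
        Multiset.replicate (2 * s * t - s - 1) (0 : ℝ) ∧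
    (spec (blowup (KssMinus s) t)ᶜ).toFinset.card = 4 ∧
    (spec (blowup (KssMinus s) t)ᶜ).count ((s : ℝ) * t) = 1 ∧
    (spec (blowup (KssMinus s) t)ᶜ).count ((s : ℝ) * t - 2 * t) = 1 ∧
    2 ≤ (spec (blowup (KssMinus s) t)ᶜ).count (0 : ℝ) := by
  have : NeZero s := ⟨by omega⟩
  have : NeZero t := ⟨by omega⟩
  have hS : (3 : ℝ) ≤ s := by exact_mod_cast hs
  have hT : (1 : ℝ) ≤ t := by exact_mod_cast ht
  have hdistinct : [(s : ℝ) * t, (s : ℝ) * t - 2 * t, -2 * (t : ℝ), 0].Nodup := by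
    simp only [List.nodup_cons, List.mem_cons, List.not_mem_nil, or_false, List.nodup_nil,
      not_or, not_false_eq_true, and_true]
    refine ⟨⟨?_, ?_, ?_⟩, ⟨?_, ?_⟩, ?_⟩ <;> nlinarith
  have hzeros : 2 ≤ 2 * s * t - s - 1 := by
    apply Nat.le_sub_of_add_le
    apply Nat.le_sub_of_add_le
    nlinarith
  obtain ⟨hcard, hcount, hcount', hcount₀⟩ := Multiset.card_toFinset_and_count_of_nodup
    (spec_compl_blowup_kssMinus s t) (by omega) (by omega) hdistinct
  exact ⟨connected_compl_blowup (connected_compl_kssMinus s) (exists_compl_kssMinus_adj s),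
    isReg_compl_blowup _ _ (isReg_compl_kssMinus s), spec_compl_blowup_kssMinus s t, hcard, hcount,
    hcount', hcount₀ ▸ hzeros⟩
end
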